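/- arXiv:2407.07679 — 2 statements merged into one kernel-verified Lean document; each statement's English description precedes it below -/
import Mathlib

section
/- For ℓ ≥ 2, set X^∘ := X^{(1)}X^{(2)}···X^{(ℓ)} (matrix product over D_ℓ). Then in D_ℓ: X^{(1)}_1 X^∘_2 = R_{21}^{−1} X^∘_2 R_{21} X^{(1)}_1 and X^∘_1 X^{(ℓ)}_2 = X^{(ℓ)}_2 R_{21} X^∘_1 R_{21}^{−1}; moreover, for ℓ ≥ 3 and any a ≠ 1, ℓ, X^{(a)}_1 X^∘_2 = X^∘_2 X^{(a)}_1. -/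
noncomputable section
open scoped BigOperators

namespace Rmatrix

/-- The base field `ℂ(q)`. -/
abbrev K : Type := RatFunc ℂ

/-- The parameter `q`. -/
def qq : K := RatFunc.X

/-- Row/column index type for `M_n ⊗ M_n`. -/
abbrev Idx (n : ℕ) := Fin n × Fin n

/-- The `R`-matrix
`R = q Σᵢ Eᵢᵢ⊗Eᵢᵢ + Σ_{i≠j} Eᵢᵢ⊗Eⱼⱼ + (q−q⁻¹) Σ_{i>j} Eⱼᵢ⊗Eᵢⱼ`. -/
def Rm (n : ℕ) : Matrix (Idx n) (Idx n) K := fun p r =>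
  (if p.1 = r.1 ∧ p.2 = r.2 ∧ p.1 = p.2 then qq else 0) +
  (if p.1 = r.1 ∧ p.2 = r.2 ∧ p.1 ≠ p.2 then 1 else 0) +
  (if p.1 = r.2 ∧ p.2 = r.1 ∧ p.1 < p.2 then qq - qq⁻¹ else 0)

/-- `R₂₁`, the `R`-matrix with the two tensor factors swapped. -/
def Rm21 (n : ℕ) : Matrix (Idx n) (Idx n) K := fun p r => Rm n (p.2, p.1) (r.2, r.1)

variable (n : ℕ) (A : Type) [Ring A] [Algebra K A]

/-- A scalar matrix viewed as a matrix with entries in the `K`-algebra `A`. -/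
def ext (M : Matrix (Idx n) (Idx n) K) : Matrix (Idx n) (Idx n) A :=
  M.map (algebraMap K A)

/-- `M₁ = Σ E_ij ⊗ I ⊗ m_ij`, the matrix `M` placed in the first tensor factor. -/
def m1 (M : Matrix (Fin n) (Fin n) A) : Matrix (Idx n) (Idx n) A :=
  fun p r => if p.2 = r.2 then M p.1 r.1 else 0

/-- `M₂ = Σ I ⊗ E_ij ⊗ m_ij`, the matrix `M` placed in the second tensor factor. -/
def m2 (M : Matrix (Fin n) (Fin n) A) : Matrix (Idx n) (Idx n) A :=
  fun p r => if p.1 = r.1 then M p.2 r.2 else 0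

/-- `Ω = Σ_{ij} E_ij ⊗ E_ji ⊗ 1`. -/
def Om : Matrix (Idx n) (Idx n) A := fun p r => if p.1 = r.2 ∧ p.2 = r.1 then 1 else 0

end Rmatrix

namespace Dell

open Rmatrix

variable (ℓ n : ℕ)

/-- Generators `x_ij^{(a)}`, `∂_ij^{(a)}` of `D_ℓ`, for `a ∈ ℤ/ℓℤ`. -/
inductive Gen (ℓ n : ℕ) : Type
  | x : ZMod ℓ → Fin n → Fin n → Gen ℓ n
  | d : ZMod ℓ → Fin n → Fin n → Gen ℓ n

abbrev F (ℓ n : ℕ) := FreeAlgebra K (Gen ℓ n)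

/-- The matrix `X^{(a)}` of generators, over the free algebra. -/
def XF (a : ZMod ℓ) : Matrix (Fin n) (Fin n) (F ℓ n) :=
  fun i j => FreeAlgebra.ι K (Gen.x a i j)

/-- The matrix `D^{(a)}` of generators, over the free algebra. -/
def DF (a : ZMod ℓ) : Matrix (Fin n) (Fin n) (F ℓ n) :=
  fun i j => FreeAlgebra.ι K (Gen.d a i j)

/-- `R` over the free algebra. -/
def Rf : Matrix (Idx n) (Idx n) (F ℓ n) := ext n (F ℓ n) (Rm n)
/-- `R₂₁` over the free algebra. -/
def R21f : Matrix (Idx n) (Idx n) (F ℓ n) := ext n (F ℓ n) (Rm21 n)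
/-- `R⁻¹` over the free algebra. -/
def Rif : Matrix (Idx n) (Idx n) (F ℓ n) := ext n (F ℓ n) (Rm n)⁻¹
/-- `R₂₁⁻¹` over the free algebra. -/
def R21if : Matrix (Idx n) (Idx n) (F ℓ n) := ext n (F ℓ n) (Rm21 n)⁻¹
/-- `Ω` over the free algebra. -/
def Omf : Matrix (Idx n) (Idx n) (F ℓ n) := Om n (F ℓ n)

/-- `M₁` over the free algebra. -/
def o1 (M : Matrix (Fin n) (Fin n) (F ℓ n)) : Matrix (Idx n) (Idx n) (F ℓ n) :=
  m1 n (F ℓ n) M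
/-- `M₂` over the free algebra. -/
def o2 (M : Matrix (Fin n) (Fin n) (F ℓ n)) : Matrix (Idx n) (Idx n) (F ℓ n) :=
  m2 n (F ℓ n) M

/-- The defining relations of the algebra `D_ℓ` of quantum differential operators on the
framed cyclic quiver with `ℓ ≥ 2` vertices (including the replacement relations for
`ℓ = 2`). -/
inductive Rel (ℓ n : ℕ) : F ℓ n → F ℓ n → Prop
  | xaa (a : ZMod ℓ) (p r : Idx n) :
      Rel ℓ n ((R21f ℓ n * o1 ℓ n (XF ℓ n a) * o2 ℓ n (XF ℓ n a)) p r)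
              ((o2 ℓ n (XF ℓ n a) * o1 ℓ n (XF ℓ n a) * Rf ℓ n) p r)
  | daa (a : ZMod ℓ) (p r : Idx n) :
      Rel ℓ n ((R21f ℓ n * o1 ℓ n (DF ℓ n a) * o2 ℓ n (DF ℓ n a)) p r)
              ((o2 ℓ n (DF ℓ n a) * o1 ℓ n (DF ℓ n a) * Rf ℓ n) p r)
  | dxa (a : ZMod ℓ) (p r : Idx n) :
      Rel ℓ n ((o2 ℓ n (DF ℓ n a) * Rif ℓ n * o1 ℓ n (XF ℓ n a)) p r)
              ((o1 ℓ n (XF ℓ n a) * Rf ℓ n * o2 ℓ n (DF ℓ n a) + (qq - qq⁻¹) • Omf ℓ n) p r)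
  | xxadj (h : 3 ≤ ℓ) (a : ZMod ℓ) (p r : Idx n) :
      Rel ℓ n ((o1 ℓ n (XF ℓ n a) * o2 ℓ n (XF ℓ n (a - 1))) p r)
              ((o2 ℓ n (XF ℓ n (a - 1)) * R21f ℓ n * o1 ℓ n (XF ℓ n a)) p r)
  | xxcom (a b : ZMod ℓ) (h : b ≠ a ∧ b ≠ a + 1 ∧ b ≠ a - 1) (p r : Idx n) :
      Rel ℓ n ((o1 ℓ n (XF ℓ n a) * o2 ℓ n (XF ℓ n b)) p r)
              ((o2 ℓ n (XF ℓ n b) * o1 ℓ n (XF ℓ n a)) p r)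
  | ddadj (h : 3 ≤ ℓ) (a : ZMod ℓ) (p r : Idx n) :
      Rel ℓ n ((o1 ℓ n (DF ℓ n a) * o2 ℓ n (DF ℓ n (a + 1))) p r)
              ((o2 ℓ n (DF ℓ n (a + 1)) * Rif ℓ n * o1 ℓ n (DF ℓ n a)) p r)
  | ddcom (a b : ZMod ℓ) (h : b ≠ a ∧ b ≠ a + 1 ∧ b ≠ a - 1) (p r : Idx n) :
      Rel ℓ n ((o1 ℓ n (DF ℓ n a) * o2 ℓ n (DF ℓ n b)) p r)
              ((o2 ℓ n (DF ℓ n b) * o1 ℓ n (DF ℓ n a)) p r)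
  | dxadj1 (h : 3 ≤ ℓ) (a : ZMod ℓ) (p r : Idx n) :
      Rel ℓ n ((o1 ℓ n (DF ℓ n a) * o2 ℓ n (XF ℓ n (a + 1))) p r)
              ((Rf ℓ n * o2 ℓ n (XF ℓ n (a + 1)) * o1 ℓ n (DF ℓ n a)) p r)
  | dxadj2 (h : 3 ≤ ℓ) (a : ZMod ℓ) (p r : Idx n) :
      Rel ℓ n ((o1 ℓ n (DF ℓ n a) * o2 ℓ n (XF ℓ n (a - 1))) p r)
              ((o2 ℓ n (XF ℓ n (a - 1)) * o1 ℓ n (DF ℓ n a) * R21if ℓ n) p r)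
  | dxcom (a b : ZMod ℓ) (h : b ≠ a ∧ b ≠ a + 1 ∧ b ≠ a - 1) (p r : Idx n) :
      Rel ℓ n ((o1 ℓ n (DF ℓ n a) * o2 ℓ n (XF ℓ n b)) p r)
              ((o2 ℓ n (XF ℓ n b) * o1 ℓ n (DF ℓ n a)) p r)
  | xxadj2 (h : ℓ = 2) (p r : Idx n) :
      Rel ℓ n ((o1 ℓ n (XF ℓ n (1 + 1)) * Rf ℓ n * o2 ℓ n (XF ℓ n 1)) p r)
              ((o2 ℓ n (XF ℓ n 1) * R21f ℓ n * o1 ℓ n (XF ℓ n (1 + 1))) p r)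
  | ddadj2 (h : ℓ = 2) (p r : Idx n) :
      Rel ℓ n ((o1 ℓ n (DF ℓ n 1) * R21if ℓ n * o2 ℓ n (DF ℓ n (1 + 1))) p r)
              ((o2 ℓ n (DF ℓ n (1 + 1)) * Rif ℓ n * o1 ℓ n (DF ℓ n 1)) p r)
  | dxadj2' (h : ℓ = 2) (a : ZMod ℓ) (p r : Idx n) :
      Rel ℓ n ((o1 ℓ n (DF ℓ n a) * o2 ℓ n (XF ℓ n (a + 1))) p r)
              ((R21if ℓ n * o2 ℓ n (XF ℓ n (a + 1)) * o1 ℓ n (DF ℓ n a) * R21if ℓ n) p r)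

/-- The algebra `D_ℓ` of quantum differential operators on the framed cyclic quiver. -/
abbrev Dl (ℓ n : ℕ) := RingQuot (Rel ℓ n)

/-- The matrix `X^{(a)}` over `D_ℓ`. -/
def XM (a : ZMod ℓ) : Matrix (Fin n) (Fin n) (Dl ℓ n) :=
  fun i j => RingQuot.mkAlgHom K (Rel ℓ n) (XF ℓ n a i j)

/-- The matrix `D^{(a)}` over `D_ℓ`. -/
def DM (a : ZMod ℓ) : Matrix (Fin n) (Fin n) (Dl ℓ n) :=
  fun i j => RingQuot.mkAlgHom K (Rel ℓ n) (DF ℓ n a i j)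

/-- `R` over `D_ℓ`. -/
def Ra : Matrix (Idx n) (Idx n) (Dl ℓ n) := ext n (Dl ℓ n) (Rm n)
/-- `R₂₁` over `D_ℓ`. -/
def R21a : Matrix (Idx n) (Idx n) (Dl ℓ n) := ext n (Dl ℓ n) (Rm21 n)
/-- `R⁻¹` over `D_ℓ`. -/
def Ria : Matrix (Idx n) (Idx n) (Dl ℓ n) := ext n (Dl ℓ n) (Rm n)⁻¹
/-- `R₂₁⁻¹` over `D_ℓ`. -/
def R21ia : Matrix (Idx n) (Idx n) (Dl ℓ n) := ext n (Dl ℓ n) (Rm21 n)⁻¹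

/-- `M₁` over `D_ℓ`. -/
def q1 (M : Matrix (Fin n) (Fin n) (Dl ℓ n)) : Matrix (Idx n) (Idx n) (Dl ℓ n) :=
  m1 n (Dl ℓ n) M
/-- `M₂` over `D_ℓ`. -/
def q2 (M : Matrix (Fin n) (Fin n) (Dl ℓ n)) : Matrix (Idx n) (Idx n) (Dl ℓ n) :=
  m2 n (Dl ℓ n) M

/-- `X^∘ := X^{(1)} X^{(2)} ⋯ X^{(ℓ)}`. -/
def Xcirc : Matrix (Fin n) (Fin n) (Dl ℓ n) :=
  ((List.range ℓ).map fun k => XM ℓ n ((k : ZMod ℓ) + 1)).prod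

/-- `^LỸ^{(a)} := I + X^{(a)} D^{(a)}`. -/
def LY (a : ZMod ℓ) : Matrix (Fin n) (Fin n) (Dl ℓ n) := 1 + XM ℓ n a * DM ℓ n a

/-- `^RY^{(a)} := I + D^{(a)} X^{(a)}`. -/
def RYa (a : ZMod ℓ) : Matrix (Fin n) (Fin n) (Dl ℓ n) := 1 + DM ℓ n a * XM ℓ n a

end Dell

/-!
Write `X₁ a`, `X₂ a` for `X^{(a)}₁`, `X^{(a)}₂`. By the defining relations `X₁ a` commutes with
`X₂ b` unless `b ∈ {a - 1, a, a + 1}`, and the three exceptional factors are absorbed by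
`X₁ a X₂ (a-1) = X₂ (a-1) R₂₁ X₁ a`, `R₂₁ X₁ a X₂ a = X₂ a X₁ a R` and
`X₁ a R X₂ (a+1) = X₂ (a+1) X₁ a`. Hence `X₁ a` commutes with `X₂ (a-1) X₂ a X₂ (a+1)`, which gives
the third identity, and `X₁ c R P = P R₂₁ X₁ c` for `P = X₂ (c+1) ⋯ X₂ (c-1)` and every vertex `c`
(for `ℓ = 2` this is the modified adjacent relation). The case `c = 1` gives the first identity,
and the flip of the tensor factors at `c = 0` the second. `R₂₁` is invertible because `R` is
triangular for the lexicographic order on index pairs.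
-/

namespace Rmatrix

/-- The only off-diagonal entries of `R` sit at `((i, j), (j, i))` with `i < j`. -/
lemma isUpperTriangular_Rm_lex (n : ℕ) :
    ((Rm n).submatrix toLex.symm toLex.symm :
      Matrix (Lex (Idx n)) (Lex (Idx n)) K).IsUpperTriangular := by
  intro p r hrp
  change Rm n (ofLex p) (ofLex r) = 0
  obtain ⟨⟨i, j⟩, rfl⟩ := toLex.surjective p
  obtain ⟨⟨k, l⟩, rfl⟩ := toLex.surjective r
  simp only [id, Prod.Lex.toLex_lt_toLex] at hrp
  simp only [ofLex_toLex, Rm]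
  rcases hrp with h | ⟨rfl, h⟩
  · simp only [h.ne', false_and, if_false, add_zero, zero_add]
    exact if_neg fun ⟨_, hjk, hij⟩ => lt_asymm h (hjk ▸ hij)
  · simp only [h.ne', and_false, false_and, if_false, zero_add]
    exact if_neg fun ⟨_, hjk, hkj⟩ => (hjk ▸ hkj).false

lemma det_Rm_ne_zero (n : ℕ) : (Rm n).det ≠ 0 := by
  rw [← Matrix.det_submatrix_equiv_self toLex.symm,
    Matrix.det_of_isUpperTriangular (isUpperTriangular_Rm_lex n)]
  refine Finset.prod_ne_zero_iff.mpr fun p _ => ?_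
  by_cases h : (ofLex p).1 = (ofLex p).2 <;> simp [Rm, h, qq, RatFunc.X_ne_zero]

lemma Rm21_eq_submatrix (n : ℕ) :
    Rm21 n = (Rm n).submatrix (Equiv.prodComm _ _) (Equiv.prodComm _ _) := rfl

lemma isUnit_det_Rm21 (n : ℕ) : IsUnit (Rm21 n).det := by
  rw [Rm21_eq_submatrix, Matrix.det_submatrix_equiv_self]
  exact (det_Rm_ne_zero n).isUnit

section Embeddings

variable (n : ℕ) (A : Type) [Ring A]

def m1Hom : Matrix (Fin n) (Fin n) A →+* Matrix (Idx n) (Idx n) A :=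
  (Matrix.blockDiagonalRingHom (Fin n) (Fin n) A).comp (Pi.constRingHom (Fin n) _)

lemma m1Hom_apply (M : Matrix (Fin n) (Fin n) A) : m1Hom n A M = m1 n A M := rfl

def swapFactors : Matrix (Idx n) (Idx n) A ≃+* Matrix (Idx n) (Idx n) A :=
  Matrix.reindexRingEquiv A (Equiv.prodComm (Fin n) (Fin n))

lemma swapFactors_m1 (M : Matrix (Fin n) (Fin n) A) : swapFactors n A (m1 n A M) = m2 n A M :=
  rfl

lemma map_m1 {B : Type} [Ring B] {F : Type} [FunLike F A B] [ZeroHomClass F A B] (f : F)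
    (M : Matrix (Fin n) (Fin n) A) : (m1 n A M).map f = m1 n B (M.map f) := by
  ext p r
  simp only [m1, Matrix.map_apply, apply_ite f, map_zero]

lemma map_m2 {B : Type} [Ring B] {F : Type} [FunLike F A B] [ZeroHomClass F A B] (f : F)
    (M : Matrix (Fin n) (Fin n) A) : (m2 n A M).map f = m2 n B (M.map f) := by
  ext p r
  simp only [m2, Matrix.map_apply, apply_ite f, map_zero]

variable [Algebra K A]

lemma ext_eq_mapMatrix (M : Matrix (Idx n) (Idx n) K) :
    ext n A M = (algebraMap K A).mapMatrix M := rfl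

lemma ext_Rm21_mul_ext_inv : ext n A (Rm21 n) * ext n A (Rm21 n)⁻¹ = 1 := by
  rw [ext_eq_mapMatrix, ext_eq_mapMatrix, ← map_mul,
    Matrix.mul_nonsing_inv _ (isUnit_det_Rm21 n), map_one]

lemma ext_inv_Rm21_mul_ext : ext n A (Rm21 n)⁻¹ * ext n A (Rm21 n) = 1 := by
  rw [ext_eq_mapMatrix, ext_eq_mapMatrix, ← map_mul,
    Matrix.nonsing_inv_mul _ (isUnit_det_Rm21 n), map_one]

lemma map_ext {B : Type} [Ring B] [Algebra K B] (f : A →ₐ[K] B) (M : Matrix (Idx n) (Idx n) K) :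
    (ext n A M).map f = ext n B M := by
  ext p r
  exact f.commutes _

end Embeddings

end Rmatrix

namespace Dell

open Rmatrix

variable (ℓ n : ℕ)

def X₁ (a : ZMod ℓ) : Matrix (Idx n) (Idx n) (Dl ℓ n) := q1 ℓ n (XM ℓ n a)

def X₂ (a : ZMod ℓ) : Matrix (Idx n) (Idx n) (Dl ℓ n) := q2 ℓ n (XM ℓ n a)

lemma swapFactors_X₁ (a : ZMod ℓ) : swapFactors n _ (X₁ ℓ n a) = X₂ ℓ n a := rfl
lemma swapFactors_X₂ (a : ZMod ℓ) : swapFactors n _ (X₂ ℓ n a) = X₁ ℓ n a := rfl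
lemma swapFactors_Ra : swapFactors n _ (Ra ℓ n) = R21a ℓ n := rfl
lemma swapFactors_R21a : swapFactors n _ (R21a ℓ n) = Ra ℓ n := rfl

lemma R21a_mul_R21ia : R21a ℓ n * R21ia ℓ n = 1 := ext_Rm21_mul_ext_inv n _
lemma R21ia_mul_R21a : R21ia ℓ n * R21a ℓ n = 1 := ext_inv_Rm21_mul_ext n _

section Relations

local notation "mk" => RingQuot.mkAlgHom K (Rel ℓ n)

lemma map_mk_eq_of_rel {M N : Matrix (Idx n) (Idx n) (F ℓ n)}
    (h : ∀ p r, Rel ℓ n (M p r) (N p r)) : M.map mk = N.map mk :=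
  Matrix.ext fun p r => RingQuot.mkAlgHom_rel K (h p r)

lemma map_mk_XF (a : ZMod ℓ) : (XF ℓ n a).map mk = XM ℓ n a := rfl

lemma R21a_mul_X₁_mul_X₂ (a : ZMod ℓ) :
    R21a ℓ n * X₁ ℓ n a * X₂ ℓ n a = X₂ ℓ n a * X₁ ℓ n a * Ra ℓ n := by
  simpa only [Matrix.map_mul, o1, o2, R21f, Rf, map_m1, map_m2, map_ext, map_mk_XF, X₁, X₂,
    q1, q2, Ra, R21a] using map_mk_eq_of_rel ℓ n (Rel.xaa a)

lemma X₁_mul_X₂_of_add_one_eq (h3 : 3 ≤ ℓ) {a b : ZMod ℓ} (h : b + 1 = a) :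
    X₁ ℓ n a * X₂ ℓ n b = X₂ ℓ n b * R21a ℓ n * X₁ ℓ n a := by
  obtain rfl := h
  simpa only [Matrix.map_mul, o1, o2, R21f, map_m1, map_m2, map_ext, map_mk_XF,
    add_sub_cancel_right, X₁, X₂, q1, q2, R21a] using map_mk_eq_of_rel ℓ n (Rel.xxadj h3 (b + 1))

lemma commute_X₁_X₂ {a b : ZMod ℓ} (h : b ≠ a ∧ b ≠ a + 1 ∧ b ≠ a - 1) :
    Commute (X₁ ℓ n a) (X₂ ℓ n b) := by
  simpa only [Matrix.map_mul, o1, o2, map_m1, map_m2, map_mk_XF, X₁, X₂, q1, q2, Commute,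
    SemiconjBy] using map_mk_eq_of_rel ℓ n (Rel.xxcom a b h)

lemma X₁_mul_Ra_mul_X₂_of_eq_two (h2 : ℓ = 2) :
    X₁ ℓ n (1 + 1) * Ra ℓ n * X₂ ℓ n 1 = X₂ ℓ n 1 * R21a ℓ n * X₁ ℓ n (1 + 1) := by
  simpa only [Matrix.map_mul, o1, o2, R21f, Rf, map_m1, map_m2, map_ext, map_mk_XF, X₁, X₂,
    q1, q2, Ra, R21a] using map_mk_eq_of_rel ℓ n (Rel.xxadj2 h2)

end Relations

lemma Ra_mul_X₂_mul_X₁ (a : ZMod ℓ) :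
    Ra ℓ n * X₂ ℓ n a * X₁ ℓ n a = X₁ ℓ n a * X₂ ℓ n a * R21a ℓ n := by
  simpa only [map_mul, swapFactors_X₁, swapFactors_X₂, swapFactors_Ra, swapFactors_R21a]
    using congrArg (swapFactors n _) (R21a_mul_X₁_mul_X₂ ℓ n a)

lemma X₂_mul_X₁_of_add_one_eq (h3 : 3 ≤ ℓ) {a b : ZMod ℓ} (h : b + 1 = a) :
    X₂ ℓ n a * X₁ ℓ n b = X₁ ℓ n b * Ra ℓ n * X₂ ℓ n a := by
  simpa only [map_mul, swapFactors_X₁, swapFactors_X₂, swapFactors_Ra, swapFactors_R21a]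
    using congrArg (swapFactors n _) (X₁_mul_X₂_of_add_one_eq ℓ n h3 h)

lemma X₂_mul_R21a_mul_X₁_of_eq_two (h2 : ℓ = 2) :
    X₂ ℓ n (1 + 1) * R21a ℓ n * X₁ ℓ n 1 = X₁ ℓ n 1 * Ra ℓ n * X₂ ℓ n (1 + 1) := by
  simpa only [map_mul, swapFactors_X₁, swapFactors_X₂, swapFactors_Ra, swapFactors_R21a]
    using congrArg (swapFactors n _) (X₁_mul_Ra_mul_X₂_of_eq_two ℓ n h2)

lemma commute_X₁_X₂_of_far (e : ℕ) (he : e + 4 ≤ ℓ) {a b : ZMod ℓ}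
    (h : b = a + (e + 2 : ℕ) ∨ a = b + (e + 2 : ℕ)) : Commute (X₁ ℓ n a) (X₂ ℓ n b) := by
  have hne (k : ℕ) (hk0 : 0 < k) (hkℓ : k < ℓ) : (k : ZMod ℓ) ≠ 0 := by
    rw [Ne, ZMod.natCast_eq_zero_iff]
    exact Nat.not_dvd_of_pos_of_lt hk0 hkℓ
  have h1 := hne (e + 1) (by omega) (by omega)
  have h2 := hne (e + 2) (by omega) (by omega)
  have h3 := hne (e + 3) (by omega) (by omega)
  push_cast at h1 h2 h3 h
  refine commute_X₁_X₂ ℓ n ⟨?_, ?_, ?_⟩ <;> grind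

lemma commute_X₁_window (h3 : 3 ≤ ℓ) (a : ZMod ℓ) :
    Commute (X₁ ℓ n a) (X₂ ℓ n (a - 1) * X₂ ℓ n a * X₂ ℓ n (a + 1)) := by
  have hprev := X₁_mul_X₂_of_add_one_eq ℓ n h3 (sub_add_cancel a 1)
  have hnext := X₂_mul_X₁_of_add_one_eq ℓ n h3 (rfl : a + 1 = a + 1)
  calc X₁ ℓ n a * (X₂ ℓ n (a - 1) * X₂ ℓ n a * X₂ ℓ n (a + 1))
      = X₂ ℓ n (a - 1) * (R21a ℓ n * X₁ ℓ n a * X₂ ℓ n a) * X₂ ℓ n (a + 1) := by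
        rw [← mul_assoc, ← mul_assoc, hprev]; simp only [mul_assoc]
    _ = X₂ ℓ n (a - 1) * X₂ ℓ n a * (X₁ ℓ n a * Ra ℓ n * X₂ ℓ n (a + 1)) := by
        rw [R21a_mul_X₁_mul_X₂]; simp only [mul_assoc]
    _ = _ := by rw [← hnext]; simp only [mul_assoc]

def followingProd {M : Type*} [Monoid M] (f : ZMod ℓ → M) (c : ZMod ℓ) : M :=
  ((List.range (ℓ - 1)).map fun k : ℕ => f (c + (k + 1 : ℕ))).prod

lemma followingProd_two {M : Type*} [Monoid M] (f : ZMod 2 → M) (c : ZMod 2) :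
    followingProd 2 f c = f (c + 1) := by
  simp [followingProd]

lemma swapFactors_followingProd (c : ZMod ℓ) :
    swapFactors n _ (followingProd ℓ (X₂ ℓ n) c) = followingProd ℓ (X₁ ℓ n) c := by
  simp only [followingProd, map_list_prod, List.map_map]
  rfl

lemma X₁_mul_Ra_mul_followingProd (hl : 2 ≤ ℓ) (c : ZMod ℓ) :
    X₁ ℓ n c * Ra ℓ n * followingProd ℓ (X₂ ℓ n) c
      = followingProd ℓ (X₂ ℓ n) c * R21a ℓ n * X₁ ℓ n c := by
  rcases hl.eq_or_lt with rfl | h3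
  · rw [followingProd_two]
    obtain rfl | rfl : c = 1 + 1 ∨ c = 1 := by revert c; decide
    · exact X₁_mul_Ra_mul_X₂_of_eq_two 2 n rfl
    · exact (X₂_mul_R21a_mul_X₁_of_eq_two 2 n rfl).symm
  obtain ⟨m, rfl⟩ : ∃ m, ℓ = m + 3 := ⟨ℓ - 3, by omega⟩
  rw [followingProd, show m + 3 - 1 = m + 1 + 1 by omega, List.prod_range_succ,
    List.prod_range_succ']
  simp only [Nat.succ_eq_add_one]
  set z := X₁ (m + 3) n c
  set y := X₂ (m + 3) n
  set middle := ((List.range m).map fun k => y (c + (k + 1 + 1 : ℕ))).prod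
  have hfirst : z * Ra (m + 3) n * y (c + (0 + 1 : ℕ)) = y (c + (0 + 1 : ℕ)) * z :=
    (X₂_mul_X₁_of_add_one_eq _ n (by omega) (by push_cast; ring)).symm
  have hmiddle : Commute z middle :=
    Commute.list_prod_right _ _ fun x hx => by
      obtain ⟨k, hk, rfl⟩ := List.mem_map.mp hx
      have hkm := List.mem_range.mp hk
      exact commute_X₁_X₂_of_far _ n k (by omega) (Or.inl (by push_cast; ring))
  have hlast : z * y (c + (m + 1 + 1 : ℕ)) = y (c + (m + 1 + 1 : ℕ)) * R21a (m + 3) n * z := by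
    refine X₁_mul_X₂_of_add_one_eq _ n (by omega) ?_
    have : ((m + 3 : ℕ) : ZMod (m + 3)) = 0 := ZMod.natCast_self _
    push_cast at this ⊢
    linear_combination this
  calc z * Ra (m + 3) n * (y (c + (0 + 1 : ℕ)) * middle * y (c + (m + 1 + 1 : ℕ)))
      = (z * Ra (m + 3) n * y (c + (0 + 1 : ℕ))) * middle * y (c + (m + 1 + 1 : ℕ)) := by
        simp only [mul_assoc]
    _ = y (c + (0 + 1 : ℕ)) * (z * middle) * y (c + (m + 1 + 1 : ℕ)) := by
        rw [hfirst]; simp only [mul_assoc]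
    _ = y (c + (0 + 1 : ℕ)) * middle * (z * y (c + (m + 1 + 1 : ℕ))) := by
        rw [hmiddle.eq]; simp only [mul_assoc]
    _ = _ := by rw [hlast]; simp only [mul_assoc]

lemma X₂_mul_R21a_mul_followingProd (hl : 2 ≤ ℓ) (c : ZMod ℓ) :
    X₂ ℓ n c * R21a ℓ n * followingProd ℓ (X₁ ℓ n) c
      = followingProd ℓ (X₁ ℓ n) c * Ra ℓ n * X₂ ℓ n c := by
  simpa only [map_mul, swapFactors_X₁, swapFactors_X₂, swapFactors_Ra, swapFactors_R21a,
      swapFactors_followingProd]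
    using congrArg (swapFactors n _) (X₁_mul_Ra_mul_followingProd ℓ n hl c)

lemma q1_Xcirc_eq_prod :
    q1 ℓ n (Xcirc ℓ n) = ((List.range ℓ).map fun k : ℕ => X₁ ℓ n ((k : ZMod ℓ) + 1)).prod := by
  rw [q1, ← m1Hom_apply, Xcirc, map_list_prod]
  simp only [bind_pure_comp, List.map_eq_map, List.map_map]
  rfl

lemma q2_Xcirc_eq_prod :
    q2 ℓ n (Xcirc ℓ n) = ((List.range ℓ).map fun k : ℕ => X₂ ℓ n ((k : ZMod ℓ) + 1)).prod := by
  rw [q2, ← swapFactors_m1, ← m1Hom_apply, Xcirc, map_list_prod, map_list_prod]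
  simp only [bind_pure_comp, List.map_eq_map, List.map_map]
  rfl

lemma q2_Xcirc (hl : 1 ≤ ℓ) : q2 ℓ n (Xcirc ℓ n) = X₂ ℓ n 1 * followingProd ℓ (X₂ ℓ n) 1 := by
  obtain ⟨m, rfl⟩ : ∃ m, ℓ = m + 1 := ⟨ℓ - 1, by omega⟩
  rw [q2_Xcirc_eq_prod, List.prod_range_succ', followingProd, Nat.add_sub_cancel]
  push_cast
  simp only [zero_add, add_comm]

lemma q1_Xcirc (hl : 1 ≤ ℓ) : q1 ℓ n (Xcirc ℓ n) = followingProd ℓ (X₁ ℓ n) 0 * X₁ ℓ n 0 := by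
  obtain ⟨m, rfl⟩ : ∃ m, ℓ = m + 1 := ⟨ℓ - 1, by omega⟩
  rw [q1_Xcirc_eq_prod, List.prod_range_succ, followingProd, Nat.add_sub_cancel]
  have : ((m : ℕ) : ZMod (m + 1)) + 1 = 0 := by exact_mod_cast ZMod.natCast_self (m + 1)
  push_cast
  simp only [zero_add, this]

lemma commute_X₁_q2_Xcirc (h3 : 3 ≤ ℓ) {a : ZMod ℓ} (ha0 : a ≠ 0) (ha1 : a ≠ 1) :
    Commute (X₁ ℓ n a) (q2 ℓ n (Xcirc ℓ n)) := by
  have : NeZero ℓ := ⟨by omega⟩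
  obtain ⟨j, hj, rfl⟩ : ∃ j < ℓ, (j : ZMod ℓ) = a :=
    ⟨a.val, ZMod.val_lt a, ZMod.natCast_zmod_val a⟩
  obtain ⟨i, rfl⟩ : ∃ i, j = i + 2 := by
    refine ⟨j - 2, ?_⟩
    rcases j with _ | _ | j
    · exact absurd Nat.cast_zero ha0
    · exact absurd Nat.cast_one ha1
    · omega
  obtain ⟨m, rfl⟩ : ∃ m, ℓ = i + 3 + m := ⟨ℓ - (i + 3), by omega⟩
  set z := X₁ (i + 3 + m) n ((i + 2 : ℕ) : ZMod (i + 3 + m))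
  set y := X₂ (i + 3 + m) n
  rw [q2_Xcirc_eq_prod, List.range_add, List.map_append, List.prod_append, List.map_map,
    List.prod_range_succ, List.prod_range_succ, List.prod_range_succ]
  have hbefore : Commute z ((List.range i).map fun k : ℕ => y ((k : ZMod _) + 1)).prod :=
    Commute.list_prod_right _ _ fun x hx => by
      obtain ⟨k, hk, rfl⟩ := List.mem_map.mp hx
      obtain ⟨e, rfl⟩ := Nat.exists_eq_add_of_lt (List.mem_range.mp hk)
      exact commute_X₁_X₂_of_far _ n e (by omega) (Or.inr (by push_cast; ring))
  have hwindow := commute_X₁_window _ n (by omega) ((i + 2 : ℕ) : ZMod (i + 3 + m))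
  have hafter :
      Commute z ((List.range m).map fun k : ℕ => y (((i + 3 + k : ℕ) : ZMod _) + 1)).prod :=
    Commute.list_prod_right _ _ fun x hx => by
      obtain ⟨k, hk, rfl⟩ := List.mem_map.mp hx
      have hkm := List.mem_range.mp hk
      exact commute_X₁_X₂_of_far _ n k (by omega) (Or.inl (by push_cast; ring))
  have hprev : ((i : ℕ) : ZMod (i + 3 + m)) + 1 = ((i + 2 : ℕ) : ZMod _) - 1 := by
    push_cast; ring
  have hself : ((i + 1 : ℕ) : ZMod (i + 3 + m)) + 1 = ((i + 2 : ℕ) : ZMod _) := by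
    push_cast; ring
  rw [hprev, hself]
  simp only [mul_assoc]
  rw [← mul_assoc (X₂ _ n _) _ (List.prod _), ← mul_assoc (X₂ _ n (_ - 1)) _ (List.prod _)]
  rw [mul_assoc] at hwindow
  exact hbefore.mul_right (hwindow.mul_right hafter)

lemma X₁_one_mul_q2_Xcirc (hl : 2 ≤ ℓ) :
    X₁ ℓ n 1 * q2 ℓ n (Xcirc ℓ n) = R21ia ℓ n * q2 ℓ n (Xcirc ℓ n) * R21a ℓ n * X₁ ℓ n 1 := by
  rw [q2_Xcirc ℓ n (by omega)]
  calc X₁ ℓ n 1 * (X₂ ℓ n 1 * followingProd ℓ (X₂ ℓ n) 1)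
      = R21ia ℓ n * (R21a ℓ n * X₁ ℓ n 1 * X₂ ℓ n 1) * followingProd ℓ (X₂ ℓ n) 1 := by
        simp only [← mul_assoc, R21ia_mul_R21a, one_mul]
    _ = R21ia ℓ n * X₂ ℓ n 1 * (X₁ ℓ n 1 * Ra ℓ n * followingProd ℓ (X₂ ℓ n) 1) := by
        rw [R21a_mul_X₁_mul_X₂]; simp only [mul_assoc]
    _ = _ := by rw [X₁_mul_Ra_mul_followingProd ℓ n hl]; simp only [mul_assoc]

lemma q1_Xcirc_mul_X₂_zero (hl : 2 ≤ ℓ) :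
    q1 ℓ n (Xcirc ℓ n) * X₂ ℓ n 0 = X₂ ℓ n 0 * R21a ℓ n * q1 ℓ n (Xcirc ℓ n) * R21ia ℓ n := by
  rw [q1_Xcirc ℓ n (by omega)]
  symm
  calc X₂ ℓ n 0 * R21a ℓ n * (followingProd ℓ (X₁ ℓ n) 0 * X₁ ℓ n 0) * R21ia ℓ n
      = X₂ ℓ n 0 * R21a ℓ n * followingProd ℓ (X₁ ℓ n) 0 * X₁ ℓ n 0 * R21ia ℓ n := by
        simp only [mul_assoc]
    _ = followingProd ℓ (X₁ ℓ n) 0 * (Ra ℓ n * X₂ ℓ n 0 * X₁ ℓ n 0) * R21ia ℓ n := by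
        rw [X₂_mul_R21a_mul_followingProd ℓ n hl]; simp only [mul_assoc]
    _ = _ := by rw [Ra_mul_X₂_mul_X₁]; simp only [mul_assoc, R21a_mul_R21ia, mul_one]

end Dell

namespace Statement8

open Rmatrix Dell

theorem statement_8_general (ℓ n : ℕ) (hl : 2 ≤ ℓ) :
    (q1 ℓ n (XM ℓ n 1) * q2 ℓ n (Xcirc ℓ n)
      = R21ia ℓ n * q2 ℓ n (Xcirc ℓ n) * R21a ℓ n * q1 ℓ n (XM ℓ n 1)) ∧
    (q1 ℓ n (Xcirc ℓ n) * q2 ℓ n (XM ℓ n (ℓ : ZMod ℓ))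
      = q2 ℓ n (XM ℓ n (ℓ : ZMod ℓ)) * R21a ℓ n * q1 ℓ n (Xcirc ℓ n) * R21ia ℓ n) ∧
    (3 ≤ ℓ → ∀ a : ZMod ℓ, a ≠ 1 → a ≠ (ℓ : ZMod ℓ) →
      q1 ℓ n (XM ℓ n a) * q2 ℓ n (Xcirc ℓ n) = q2 ℓ n (Xcirc ℓ n) * q1 ℓ n (XM ℓ n a)) := by
  rw [ZMod.natCast_self]
  exact ⟨X₁_one_mul_q2_Xcirc ℓ n hl, q1_Xcirc_mul_X₂_zero ℓ n hl,
    fun h3 _ ha1 ha0 => (commute_X₁_q2_Xcirc ℓ n h3 ha0 ha1).eq⟩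

/--
For `ℓ ≥ 2` and `X^∘ = X^{(1)}⋯X^{(ℓ)}` in `D_ℓ`:
`X^{(1)}₁ X^∘₂ = R₂₁⁻¹ X^∘₂ R₂₁ X^{(1)}₁` and `X^∘₁ X^{(ℓ)}₂ = X^{(ℓ)}₂ R₂₁ X^∘₁ R₂₁⁻¹`;
moreover, for `ℓ ≥ 3` and `a ≠ 1, ℓ`, `X^{(a)}₁ X^∘₂ = X^∘₂ X^{(a)}₁`.
-/
theorem statement_8 (ℓ n : ℕ) (hl : 2 ≤ ℓ) (hn : 1 ≤ n) :
    (q1 ℓ n (XM ℓ n 1) * q2 ℓ n (Xcirc ℓ n)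
      = R21ia ℓ n * q2 ℓ n (Xcirc ℓ n) * R21a ℓ n * q1 ℓ n (XM ℓ n 1)) ∧
    (q1 ℓ n (Xcirc ℓ n) * q2 ℓ n (XM ℓ n (ℓ : ZMod ℓ))
      = q2 ℓ n (XM ℓ n (ℓ : ZMod ℓ)) * R21a ℓ n * q1 ℓ n (Xcirc ℓ n) * R21ia ℓ n) ∧
    (3 ≤ ℓ → ∀ a : ZMod ℓ, a ≠ 1 → a ≠ (ℓ : ZMod ℓ) →
      q1 ℓ n (XM ℓ n a) * q2 ℓ n (Xcirc ℓ n) = q2 ℓ n (Xcirc ℓ n) * q1 ℓ n (XM ℓ n a)) :=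
  statement_8_general ℓ n hl

end Statement8
end
end

section
/- For ℓ ≥ 0 and any c_+, c_- ∈ 𝕂^×, the quotient of the shifted quantum toroidal algebra U^ℓ_{q,t}(gl̈_1) by the two-sided ideal generated by ψ_0^+ − c_+ and ψ_ℓ^- − c_- is generated as a 𝕂-algebra by the images of e_0, f_0, the ψ_s^+ for s ≥ 0, the ψ_s^- for s ≤ ℓ, and (ψ_0^+)^{−1}, (ψ_ℓ^-)^{−1}. -/
noncomputable section
open scoped BigOperators

namespace Toroidal

variable (k : Type) [Field k] (q t : k)

/-- Generators of the shifted quantum toroidal algebra `U^ℓ_{q,t}(gl̈_1)`: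
`e_r`, `f_r` (`r ∈ ℤ`), `ψ⁺_s` (`s ≥ 0`), `ψ⁻_{ℓ-j}` (`j ≥ 0`, i.e. `ψ⁻_s` for `s ≤ ℓ`),
and the inverses of `ψ⁺_0` and `ψ⁻_ℓ`. -/
inductive Gen (ℓ : ℕ) : Type
  | e : ℤ → Gen ℓ
  | f : ℤ → Gen ℓ
  | pp : ℕ → Gen ℓ
  | pm : ℕ → Gen ℓ
  | ppi : Gen ℓ
  | pmi : Gen ℓ

abbrev F (ℓ : ℕ) := FreeAlgebra k (Gen ℓ)

variable (ℓ : ℕ)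

def eF (r : ℤ) : F k ℓ := FreeAlgebra.ι k (Gen.e r)
def fF (r : ℤ) : F k ℓ := FreeAlgebra.ι k (Gen.f r)
/-- `ψ⁺_s` for `s ∈ ℤ`, extended by `0` for `s < 0`. -/
def pP (s : ℤ) : F k ℓ := if 0 ≤ s then FreeAlgebra.ι k (Gen.pp s.toNat) else 0
/-- `ψ⁻_s` for `s ∈ ℤ`, extended by `0` for `s > ℓ`. -/
def pM (s : ℤ) : F k ℓ :=
  if s ≤ (ℓ : ℤ) then FreeAlgebra.ι k (Gen.pm ((ℓ : ℤ) - s).toNat) else 0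

/-- `q² + t² + q⁻²t⁻²`, the first elementary symmetric function of the roots of the
structure polynomial. -/
def c1 : k := q ^ 2 + t ^ 2 + (q ^ 2 * t ^ 2)⁻¹
/-- `q²t² + t⁻² + q⁻²`, the second elementary symmetric function. -/
def c2 : k := q ^ 2 * t ^ 2 + (t ^ 2)⁻¹ + (q ^ 2)⁻¹
/-- The constant `((1−q²)(1−t²)(1−q⁻²t⁻²))⁻¹`. -/
def c0 : k := ((1 - q ^ 2) * (1 - t ^ 2) * (1 - (q ^ 2 * t ^ 2)⁻¹))⁻¹

/-- The commutator `[x, y] = xy − yx`. -/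
def br {A : Type} [Ring A] (x y : A) : A := x * y - y * x

/-- The defining relations of the shifted quantum toroidal algebra `U^ℓ_{q,t}(gl̈_1)`,
obtained by equating coefficients in the current relations. -/
inductive Rel : F k ℓ → F k ℓ → Prop
  | ppcomm (s s' : ℤ) : Rel (pP k ℓ s * pP k ℓ s') (pP k ℓ s' * pP k ℓ s)
  | pmcomm (s s' : ℤ) : Rel (pP k ℓ s * pM k ℓ s') (pM k ℓ s' * pP k ℓ s)
  | mpcomm (s s' : ℤ) : Rel (pM k ℓ s * pP k ℓ s') (pP k ℓ s' * pM k ℓ s)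
  | mmcomm (s s' : ℤ) : Rel (pM k ℓ s * pM k ℓ s') (pM k ℓ s' * pM k ℓ s)
  | ppinv1 : Rel (FreeAlgebra.ι k (Gen.pp 0) * FreeAlgebra.ι k (Gen.ppi : Gen ℓ)) 1
  | ppinv2 : Rel (FreeAlgebra.ι k (Gen.ppi : Gen ℓ) * FreeAlgebra.ι k (Gen.pp 0)) 1
  | pminv1 : Rel (FreeAlgebra.ι k (Gen.pm 0) * FreeAlgebra.ι k (Gen.pmi : Gen ℓ)) 1
  | pminv2 : Rel (FreeAlgebra.ι k (Gen.pmi : Gen ℓ) * FreeAlgebra.ι k (Gen.pm 0)) 1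
  | ee (m j : ℤ) :
      Rel (eF k ℓ (m + 3) * eF k ℓ j - c1 k q t • (eF k ℓ (m + 2) * eF k ℓ (j + 1))
            + c2 k q t • (eF k ℓ (m + 1) * eF k ℓ (j + 2)) - eF k ℓ m * eF k ℓ (j + 3))
          (eF k ℓ j * eF k ℓ (m + 3) - c2 k q t • (eF k ℓ (j + 1) * eF k ℓ (m + 2))
            + c1 k q t • (eF k ℓ (j + 2) * eF k ℓ (m + 1)) - eF k ℓ (j + 3) * eF k ℓ m)
  | ff (m j : ℤ) :
      Rel (fF k ℓ (m + 3) * fF k ℓ j - c2 k q t • (fF k ℓ (m + 2) * fF k ℓ (j + 1))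
            + c1 k q t • (fF k ℓ (m + 1) * fF k ℓ (j + 2)) - fF k ℓ m * fF k ℓ (j + 3))
          (fF k ℓ j * fF k ℓ (m + 3) - c1 k q t • (fF k ℓ (j + 1) * fF k ℓ (m + 2))
            + c2 k q t • (fF k ℓ (j + 2) * fF k ℓ (m + 1)) - fF k ℓ (j + 3) * fF k ℓ m)
  | pe (s m : ℤ) :
      Rel (pP k ℓ (s + 3) * eF k ℓ m - c1 k q t • (pP k ℓ (s + 2) * eF k ℓ (m + 1))
            + c2 k q t • (pP k ℓ (s + 1) * eF k ℓ (m + 2)) - pP k ℓ s * eF k ℓ (m + 3))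
          (eF k ℓ m * pP k ℓ (s + 3) - c2 k q t • (eF k ℓ (m + 1) * pP k ℓ (s + 2))
            + c1 k q t • (eF k ℓ (m + 2) * pP k ℓ (s + 1)) - eF k ℓ (m + 3) * pP k ℓ s)
  | me (s m : ℤ) :
      Rel (pM k ℓ (s + 3) * eF k ℓ m - c1 k q t • (pM k ℓ (s + 2) * eF k ℓ (m + 1))
            + c2 k q t • (pM k ℓ (s + 1) * eF k ℓ (m + 2)) - pM k ℓ s * eF k ℓ (m + 3))
          (eF k ℓ m * pM k ℓ (s + 3) - c2 k q t • (eF k ℓ (m + 1) * pM k ℓ (s + 2))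
            + c1 k q t • (eF k ℓ (m + 2) * pM k ℓ (s + 1)) - eF k ℓ (m + 3) * pM k ℓ s)
  | pf (s m : ℤ) :
      Rel (pP k ℓ (s + 3) * fF k ℓ m - c2 k q t • (pP k ℓ (s + 2) * fF k ℓ (m + 1))
            + c1 k q t • (pP k ℓ (s + 1) * fF k ℓ (m + 2)) - pP k ℓ s * fF k ℓ (m + 3))
          (fF k ℓ m * pP k ℓ (s + 3) - c1 k q t • (fF k ℓ (m + 1) * pP k ℓ (s + 2))
            + c2 k q t • (fF k ℓ (m + 2) * pP k ℓ (s + 1)) - fF k ℓ (m + 3) * pP k ℓ s)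
  | mf (s m : ℤ) :
      Rel (pM k ℓ (s + 3) * fF k ℓ m - c2 k q t • (pM k ℓ (s + 2) * fF k ℓ (m + 1))
            + c1 k q t • (pM k ℓ (s + 1) * fF k ℓ (m + 2)) - pM k ℓ s * fF k ℓ (m + 3))
          (fF k ℓ m * pM k ℓ (s + 3) - c1 k q t • (fF k ℓ (m + 1) * pM k ℓ (s + 2))
            + c2 k q t • (fF k ℓ (m + 2) * pM k ℓ (s + 1)) - fF k ℓ (m + 3) * pM k ℓ s)
  | ef (r s : ℤ) :
      Rel (eF k ℓ r * fF k ℓ s - fF k ℓ s * eF k ℓ r)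
          (c0 k q t • (pP k ℓ (r + s) - pM k ℓ (r + s)))
  | serreE (a b c : ℤ) :
      Rel (∑ σ : Equiv.Perm (Fin 3),
            br (eF k ℓ (![a, b, c] (σ 0)))
               (br (eF k ℓ (![a, b, c] (σ 1) + 1)) (eF k ℓ (![a, b, c] (σ 2) - 1)))) 0
  | serreF (a b c : ℤ) :
      Rel (∑ σ : Equiv.Perm (Fin 3),
            br (fF k ℓ (![a, b, c] (σ 0)))
               (br (fF k ℓ (![a, b, c] (σ 1) + 1)) (fF k ℓ (![a, b, c] (σ 2) - 1)))) 0

/-- The shifted quantum toroidal algebra `U^ℓ_{q,t}(gl̈_1)`. -/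
abbrev UT := RingQuot (Rel k q t ℓ)

variable (cp cm : kˣ)

/-- The relations `ψ⁺_0 = c₊`, `ψ⁻_ℓ = c₋` defining the central reduction. -/
inductive SRel : UT k q t ℓ → UT k q t ℓ → Prop
  | cplus : SRel (RingQuot.mkAlgHom k (Rel k q t ℓ) (FreeAlgebra.ι k (Gen.pp 0)))
      (algebraMap k (UT k q t ℓ) (cp : k))
  | cminus : SRel (RingQuot.mkAlgHom k (Rel k q t ℓ) (FreeAlgebra.ι k (Gen.pm 0)))
      (algebraMap k (UT k q t ℓ) (cm : k))

/-- The quotient of `U^ℓ_{q,t}(gl̈_1)` by the two-sided ideal generated by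
`ψ⁺_0 − c₊` and `ψ⁻_ℓ − c₋`. -/
abbrev QT := RingQuot (SRel k q t ℓ cp cm)

/-- The canonical map from the free algebra to the central reduction. -/
def π : F k ℓ →ₐ[k] QT k q t ℓ cp cm :=
  (RingQuot.mkAlgHom k (SRel k q t ℓ cp cm)).comp (RingQuot.mkAlgHom k (Rel k q t ℓ))

end Toroidal

namespace Statement15

open Toroidal

/-- The field `𝕂 = ℂ(q,t)`. -/
abbrev 𝕂 : Type := FractionRing (MvPolynomial (Fin 2) ℂ)

/-- The parameter `q`. -/
def qe : 𝕂 := algebraMap (MvPolynomial (Fin 2) ℂ) 𝕂 (MvPolynomial.X 0)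
/-- The parameter `t`. -/
def te : 𝕂 := algebraMap (MvPolynomial (Fin 2) ℂ) 𝕂 (MvPolynomial.X 1)

end Statement15

/-!
Once `ψ⁺_0 = c₊` and `ψ⁻_ℓ = c₋` are scalars, the `ψ e` relations at the edge of the
range of `ψ⁺` (resp. `ψ⁻`) keep only two modes of `ψ` and read
`[ψ⁺_1, e_m] = (c₁ - c₂) c₊ e_{m+1}` and `[ψ⁻_{ℓ-1}, e_m] = (c₂ - c₁) c₋ e_{m-1}`,
and similarly for `f`. Since `c₂ - c₁ = (1 - q²)(1 - t²)(1 - q⁻²t⁻²)` is nonzero in `ℂ(q,t)`,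
every `e_r` and `f_r` is obtained from `e_0` and `f_0` by iterated commutators with `ψ⁺_1`
and `ψ⁻_{ℓ-1}`.
-/

theorem Subalgebra.mem_of_mul_eq_mul_add_smul {R A : Type*} [Field R] [Semiring A] [Algebra R A]
    (S : Subalgebra R A) {a x y : A} {c : R} (hc : c ≠ 0) (ha : a ∈ S) (hx : x ∈ S)
    (h : a * x = x * a + c • y) : y ∈ S := by
  have hy : y = c⁻¹ • (a * x + (-1 : R) • (x * a)) := by
    rw [h, smul_add, smul_add, smul_smul, inv_mul_cancel₀ hc, one_smul]
    module
  rw [hy]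
  exact S.smul_mem (S.add_mem (S.mul_mem ha hx) (S.smul_mem (S.mul_mem hx ha) _)) _

theorem FreeAlgebra.eq_top_of_surjective_of_ι_mem {R X B : Type*} [CommSemiring R] [Semiring B]
    [Algebra R B] {φ : FreeAlgebra R X →ₐ[R] B} (hφ : Function.Surjective φ)
    {S : Subalgebra R B} (h : ∀ x, φ (FreeAlgebra.ι R x) ∈ S) : S = ⊤ := by
  have hrange : (Algebra.adjoin R (Set.range (FreeAlgebra.ι R))).map φ = ⊤ := by
    rw [FreeAlgebra.adjoin_range_ι, Algebra.map_top, AlgHom.range_eq_top]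
    exact hφ
  rw [eq_top_iff, ← hrange, AlgHom.map_adjoin, ← Set.range_comp]
  exact Algebra.adjoin_le (Set.range_subset_iff.2 h)

namespace Toroidal

variable {k : Type} [Field k] {q t : k} {ℓ : ℕ} {cp cm : kˣ}

theorem c2_sub_c1 (hq : q ≠ 0) (ht : t ≠ 0) :
    c2 k q t - c1 k q t = (1 - q ^ 2) * (1 - t ^ 2) * (1 - (q ^ 2 * t ^ 2)⁻¹) := by
  simp only [c1, c2]
  field_simp
  ring

theorem c1_ne_c2 (hq : q ≠ 0) (ht : t ≠ 0) (hq2 : q ^ 2 ≠ 1) (ht2 : t ^ 2 ≠ 1)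
    (hqt2 : q ^ 2 * t ^ 2 ≠ 1) : c1 k q t ≠ c2 k q t := by
  rw [ne_comm, ← sub_ne_zero, c2_sub_c1 hq ht]
  refine mul_ne_zero (mul_ne_zero ?_ ?_) ?_ <;> rw [sub_ne_zero]
  · exact hq2.symm
  · exact ht2.symm
  · exact fun h => hqt2 (inv_eq_one.1 h.symm)

theorem pP_of_neg (s : ℤ) (hs : s < 0) : pP k ℓ s = 0 := if_neg (by omega)

theorem pP_natCast (n : ℕ) : pP k ℓ n = FreeAlgebra.ι k (Gen.pp n) := by simp [pP]

theorem pM_of_lt (s : ℤ) (hs : (ℓ : ℤ) < s) : pM k ℓ s = 0 := if_neg (by omega)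

theorem pM_sub_natCast (j : ℕ) : pM k ℓ (ℓ - j) = FreeAlgebra.ι k (Gen.pm j) := by simp [pM]

theorem π_surjective : Function.Surjective (π k q t ℓ cp cm) :=
  (RingQuot.mkAlgHom_surjective k _).comp (RingQuot.mkAlgHom_surjective k _)

theorem π_eq_of_rel {x y : F k ℓ} (h : Rel k q t ℓ x y) :
    π k q t ℓ cp cm x = π k q t ℓ cp cm y :=
  congrArg (RingQuot.mkAlgHom k _) (RingQuot.mkAlgHom_rel k h)

theorem π_pp_zero :
    π k q t ℓ cp cm (FreeAlgebra.ι k (Gen.pp 0)) = algebraMap k _ (cp : k) :=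
  (RingQuot.mkAlgHom_rel k (SRel.cplus (q := q) (t := t) (ℓ := ℓ) (cp := cp) (cm := cm))).trans
    (AlgHom.commutes _ _)

theorem π_pm_zero :
    π k q t ℓ cp cm (FreeAlgebra.ι k (Gen.pm 0)) = algebraMap k _ (cm : k) :=
  (RingQuot.mkAlgHom_rel k (SRel.cminus (q := q) (t := t) (ℓ := ℓ) (cp := cp) (cm := cm))).trans
    (AlgHom.commutes _ _)

theorem π_pp_one_mul_eF (m : ℤ) :
    π k q t ℓ cp cm (FreeAlgebra.ι k (Gen.pp 1)) * π k q t ℓ cp cm (eF k ℓ m)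
      = π k q t ℓ cp cm (eF k ℓ m) * π k q t ℓ cp cm (FreeAlgebra.ι k (Gen.pp 1))
      + ((c1 k q t - c2 k q t) * cp) • π k q t ℓ cp cm (eF k ℓ (m + 1)) := by
  have h := π_eq_of_rel (cp := cp) (cm := cm) (Rel.pe (q := q) (t := t) (ℓ := ℓ) (-2) m)
  rw [show (-2 : ℤ) + 3 = (1 : ℕ) by norm_num, show (-2 : ℤ) + 2 = (0 : ℕ) by norm_num,
    pP_of_neg (-2 + 1) (by norm_num), pP_of_neg (-2) (by norm_num), pP_natCast, pP_natCast] at h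
  simp only [map_sub, map_smul, map_mul, π_pp_zero, Algebra.algebraMap_eq_smul_one, smul_mul_assoc,
    mul_smul_comm, one_mul, mul_one, zero_mul, mul_zero, smul_zero, add_zero, sub_zero] at h
  rw [← sub_eq_zero] at h ⊢
  rw [← h]
  module

theorem π_pp_one_mul_fF (m : ℤ) :
    π k q t ℓ cp cm (FreeAlgebra.ι k (Gen.pp 1)) * π k q t ℓ cp cm (fF k ℓ m)
      = π k q t ℓ cp cm (fF k ℓ m) * π k q t ℓ cp cm (FreeAlgebra.ι k (Gen.pp 1))
      + ((c2 k q t - c1 k q t) * cp) • π k q t ℓ cp cm (fF k ℓ (m + 1)) := by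
  have h := π_eq_of_rel (cp := cp) (cm := cm) (Rel.pf (q := q) (t := t) (ℓ := ℓ) (-2) m)
  rw [show (-2 : ℤ) + 3 = (1 : ℕ) by norm_num, show (-2 : ℤ) + 2 = (0 : ℕ) by norm_num,
    pP_of_neg (-2 + 1) (by norm_num), pP_of_neg (-2) (by norm_num), pP_natCast, pP_natCast] at h
  simp only [map_sub, map_smul, map_mul, π_pp_zero, Algebra.algebraMap_eq_smul_one, smul_mul_assoc,
    mul_smul_comm, one_mul, mul_one, zero_mul, mul_zero, smul_zero, add_zero, sub_zero] at h
  rw [← sub_eq_zero] at h ⊢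
  rw [← h]
  module

theorem π_pm_one_mul_eF (m : ℤ) :
    π k q t ℓ cp cm (FreeAlgebra.ι k (Gen.pm 1)) * π k q t ℓ cp cm (eF k ℓ m)
      = π k q t ℓ cp cm (eF k ℓ m) * π k q t ℓ cp cm (FreeAlgebra.ι k (Gen.pm 1))
      + ((c2 k q t - c1 k q t) * cm) • π k q t ℓ cp cm (eF k ℓ (m - 1)) := by
  have h := π_eq_of_rel (cp := cp) (cm := cm)
    (Rel.me (q := q) (t := t) (ℓ := ℓ) (ℓ - (1 : ℕ)) (m - 3))
  rw [pM_of_lt (ℓ - (1 : ℕ) + 3) (by omega), pM_of_lt (ℓ - (1 : ℕ) + 2) (by omega),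
    show (ℓ : ℤ) - (1 : ℕ) + 1 = ℓ - (0 : ℕ) by omega, pM_sub_natCast, pM_sub_natCast,
    show m - 3 + 3 = m by omega, show m - 3 + 2 = m - 1 by omega] at h
  simp only [map_sub, map_smul, map_mul, π_pm_zero, Algebra.algebraMap_eq_smul_one, smul_mul_assoc,
    mul_smul_comm, one_mul, mul_one, zero_mul, mul_zero, smul_zero, zero_add, sub_zero] at h
  rw [← sub_eq_zero] at h ⊢
  rw [← neg_eq_zero, ← h]
  module

theorem π_pm_one_mul_fF (m : ℤ) :
    π k q t ℓ cp cm (FreeAlgebra.ι k (Gen.pm 1)) * π k q t ℓ cp cm (fF k ℓ m)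
      = π k q t ℓ cp cm (fF k ℓ m) * π k q t ℓ cp cm (FreeAlgebra.ι k (Gen.pm 1))
      + ((c1 k q t - c2 k q t) * cm) • π k q t ℓ cp cm (fF k ℓ (m - 1)) := by
  have h := π_eq_of_rel (cp := cp) (cm := cm)
    (Rel.mf (q := q) (t := t) (ℓ := ℓ) (ℓ - (1 : ℕ)) (m - 3))
  rw [pM_of_lt (ℓ - (1 : ℕ) + 3) (by omega), pM_of_lt (ℓ - (1 : ℕ) + 2) (by omega),
    show (ℓ : ℤ) - (1 : ℕ) + 1 = ℓ - (0 : ℕ) by omega, pM_sub_natCast, pM_sub_natCast,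
    show m - 3 + 3 = m by omega, show m - 3 + 2 = m - 1 by omega] at h
  simp only [map_sub, map_smul, map_mul, π_pm_zero, Algebra.algebraMap_eq_smul_one, smul_mul_assoc,
    mul_smul_comm, one_mul, mul_one, zero_mul, mul_zero, smul_zero, zero_add, sub_zero] at h
  rw [← sub_eq_zero] at h ⊢
  rw [← neg_eq_zero, ← h]
  module

variable (k q t ℓ cp cm) in
def generators : Set (QT k q t ℓ cp cm) :=
  {π k q t ℓ cp cm (eF k ℓ 0), π k q t ℓ cp cm (fF k ℓ 0),
    π k q t ℓ cp cm (FreeAlgebra.ι k (Gen.ppi : Gen ℓ)),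
    π k q t ℓ cp cm (FreeAlgebra.ι k (Gen.pmi : Gen ℓ))} ∪
    Set.range (fun s : ℕ => π k q t ℓ cp cm (FreeAlgebra.ι k (Gen.pp s))) ∪
    Set.range (fun j : ℕ => π k q t ℓ cp cm (FreeAlgebra.ι k (Gen.pm j)))

theorem adjoin_generators_eq_top (hc : c1 k q t ≠ c2 k q t) :
    Algebra.adjoin k (generators k q t ℓ cp cm) = ⊤ := by
  set S := Algebra.adjoin k (generators k q t ℓ cp cm)
  have mem {x} (hx : x ∈ generators k q t ℓ cp cm) : x ∈ S := Algebra.subset_adjoin hx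
  have hpp (s : ℕ) : π k q t ℓ cp cm (FreeAlgebra.ι k (Gen.pp s)) ∈ S := mem (by simp [generators])
  have hpm (j : ℕ) : π k q t ℓ cp cm (FreeAlgebra.ι k (Gen.pm j)) ∈ S := mem (by simp [generators])
  have h12 : c1 k q t - c2 k q t ≠ 0 := sub_ne_zero.2 hc
  have h21 : c2 k q t - c1 k q t ≠ 0 := sub_ne_zero.2 hc.symm
  have he (r : ℤ) : π k q t ℓ cp cm (eF k ℓ r) ∈ S := by
    induction r using Int.induction_on with
    | zero => exact mem (by simp [generators])
    | succ m ih =>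
      exact S.mem_of_mul_eq_mul_add_smul (mul_ne_zero h12 cp.ne_zero) (hpp 1) ih
        (π_pp_one_mul_eF m)
    | pred m ih =>
      exact S.mem_of_mul_eq_mul_add_smul (mul_ne_zero h21 cm.ne_zero) (hpm 1) ih
        (π_pm_one_mul_eF _)
  have hf (r : ℤ) : π k q t ℓ cp cm (fF k ℓ r) ∈ S := by
    induction r using Int.induction_on with
    | zero => exact mem (by simp [generators])
    | succ m ih =>
      exact S.mem_of_mul_eq_mul_add_smul (mul_ne_zero h21 cp.ne_zero) (hpp 1) ih
        (π_pp_one_mul_fF m)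
    | pred m ih =>
      exact S.mem_of_mul_eq_mul_add_smul (mul_ne_zero h12 cm.ne_zero) (hpm 1) ih
        (π_pm_one_mul_fF _)
  refine FreeAlgebra.eq_top_of_surjective_of_ι_mem π_surjective ?_
  rintro (r | r | s | j | _ | _)
  · exact he r
  · exact hf r
  · exact hpp s
  · exact hpm j
  · exact mem (by simp [generators])
  · exact mem (by simp [generators])

end Toroidal

namespace Statement15

open Toroidal

theorem c1_ne_c2_qe_te : c1 𝕂 qe te ≠ c2 𝕂 qe te := by
  have key {P Q : MvPolynomial (Fin 2) ℂ}
      (h : MvPolynomial.eval ![2, 3] P ≠ MvPolynomial.eval ![2, 3] Q) :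
      algebraMap _ 𝕂 P ≠ algebraMap _ 𝕂 Q :=
    fun hPQ => h (congrArg _ (IsFractionRing.injective _ 𝕂 hPQ))
  have hq : qe ≠ 0 := by
    rw [qe, ← map_zero (algebraMap (MvPolynomial (Fin 2) ℂ) 𝕂)]
    exact key (by simp)
  have ht : te ≠ 0 := by
    rw [te, ← map_zero (algebraMap (MvPolynomial (Fin 2) ℂ) 𝕂)]
    exact key (by simp)
  have hq2 : qe ^ 2 ≠ 1 := by
    rw [qe, ← map_pow, ← map_one (algebraMap (MvPolynomial (Fin 2) ℂ) 𝕂)]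
    exact key (by norm_num)
  have ht2 : te ^ 2 ≠ 1 := by
    rw [te, ← map_pow, ← map_one (algebraMap (MvPolynomial (Fin 2) ℂ) 𝕂)]
    exact key (by norm_num)
  have hqt2 : qe ^ 2 * te ^ 2 ≠ 1 := by
    rw [qe, te, ← map_pow, ← map_pow, ← map_mul, ← map_one (algebraMap (MvPolynomial (Fin 2) ℂ) 𝕂)]
    exact key (by norm_num)
  exact c1_ne_c2 hq ht hq2 ht2 hqt2

/--
For `ℓ ≥ 0` and `c₊, c₋ ∈ 𝕂^×`, the quotient of the shifted quantum
toroidal algebra `U^ℓ_{q,t}(gl̈_1)` by the two-sided ideal generated by `ψ⁺_0 − c₊` and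
`ψ⁻_ℓ − c₋` is generated as a `𝕂`-algebra by the images of `e_0`, `f_0`, the `ψ⁺_s`
(`s ≥ 0`), the `ψ⁻_s` (`s ≤ ℓ`), and `(ψ⁺_0)⁻¹`, `(ψ⁻_ℓ)⁻¹`.
-/
theorem statement_15 (ℓ : ℕ) (cp cm : 𝕂ˣ) :
    Algebra.adjoin 𝕂
      ({π 𝕂 qe te ℓ cp cm (eF 𝕂 ℓ 0), π 𝕂 qe te ℓ cp cm (fF 𝕂 ℓ 0),
        π 𝕂 qe te ℓ cp cm (FreeAlgebra.ι 𝕂 (Gen.ppi : Gen ℓ)),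
        π 𝕂 qe te ℓ cp cm (FreeAlgebra.ι 𝕂 (Gen.pmi : Gen ℓ))} ∪
        Set.range (fun s : ℕ => π 𝕂 qe te ℓ cp cm (FreeAlgebra.ι 𝕂 (Gen.pp s))) ∪
        Set.range (fun j : ℕ => π 𝕂 qe te ℓ cp cm (FreeAlgebra.ι 𝕂 (Gen.pm j)))) = ⊤ :=
  adjoin_generators_eq_top c1_ne_c2_qe_te

end Statement15
end
end
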